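/- arXiv:1307.7081 — 7 statements merged into one kernel-verified Lean document; each statement's English description precedes it below -/
import Mathlib

section
/- Let D be a domain in ℂ^m and let E be a bounded domain in ℂ^N containing 0 such that for every r ∈ (0,1) the closure of rE is contained in E. Let λ_1,…,λ_n be distinct points of D and z_1,…,z_n ∈ E. If the interpolation data λ_j ↦ z_j are co-robustly solvable for hol(D,E), then they are not co-extremally solvable; that is, there exist a compact set K contained in E and a holomorphic map h : D → K with h(λ_j) = z_j for j = 1,…,n. Consequently, if the data are co-extremally solvable then they are co-barely solvable. -/
/-!
Co-robustness lets us perturb the targets `z j` to `r⁻¹ • z j` for some `r ∈ (0,1)` and still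
solve, by a holomorphic `g : D → E`. Then `r • g` interpolates the original data and takes values
in `closure (r • E)`: a compact set, as `E` is bounded, and contained in `E` by the shrinking
hypothesis.
-/

open Set Filter Topology
open scoped Pointwise

theorem exists_mem_Ioo_forall_inv_smul_mem {ι V : Type*} [Finite ι] [TopologicalSpace V]
    [AddCommGroup V] [Module ℝ V] [ContinuousSMul ℝ V] {U : ι → Set V} {z : ι → V}
    (hU : ∀ i, U i ∈ 𝓝 (z i)) : ∃ r ∈ Ioo (0 : ℝ) 1, ∀ i, r⁻¹ • z i ∈ U i := by
  have hnear : ∀ i, ∀ᶠ r in 𝓝[<] (1 : ℝ), r⁻¹ • z i ∈ U i := fun i => by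
    have hcont : ContinuousAt (fun r : ℝ => r⁻¹ • z i) 1 :=
      (continuousAt_inv₀ one_ne_zero).smul continuousAt_const
    exact (hcont.eventually_mem (by simpa using hU i)).filter_mono nhdsWithin_le_nhds
  have hIoo : ∀ᶠ r in 𝓝[<] (1 : ℝ), r ∈ Ioo 0 1 := Ioo_mem_nhdsLT zero_lt_one
  exact (hIoo.and (eventually_all.mpr hnear)).exists

theorem corobustly_solvable_not_coextremally_solvable_general
    {m N n : ℕ} (D : Set (Fin m → ℂ)) (E : Set (Fin N → ℂ))
    (hEbdd : Bornology.IsBounded E)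
    (hshrink : ∀ r : ℝ, r ∈ Ioo (0:ℝ) 1 → closure ((fun x => r • x) '' E) ⊆ E)
    (lam : Fin n → (Fin m → ℂ))
    (z : Fin n → (Fin N → ℂ))
    (hcorobust : ∃ U : Fin n → Set (Fin N → ℂ),
      (∀ j, IsOpen (U j) ∧ z j ∈ U j ∧ U j ⊆ E) ∧
      ∀ z' : Fin n → (Fin N → ℂ), (∀ j, z' j ∈ U j) →
        ∃ h : (Fin m → ℂ) → (Fin N → ℂ),
          DifferentiableOn ℂ h D ∧ MapsTo h D E ∧ ∀ j, h (lam j) = z' j) :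
    ∃ K : Set (Fin N → ℂ), IsCompact K ∧ K ⊆ E ∧
      ∃ h : (Fin m → ℂ) → (Fin N → ℂ),
        DifferentiableOn ℂ h D ∧ MapsTo h D K ∧ ∀ j, h (lam j) = z j := by
  obtain ⟨U, hU, hsolve⟩ := hcorobust
  obtain ⟨r, hr, hrU⟩ :=
    exists_mem_Ioo_forall_inv_smul_mem fun j => (hU j).1.mem_nhds (hU j).2.1
  obtain ⟨g, hg, hgE, hgz⟩ := hsolve (fun j => r⁻¹ • z j) hrU
  have hK : IsCompact (closure ((fun x => r • x) '' E)) := by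
    simpa only [image_smul] using (hEbdd.smul₀ r).isCompact_closure
  refine ⟨_, hK, hshrink r hr, fun x => r • g x, hg.const_smul r,
    fun x hx => subset_closure (mem_image_of_mem _ (hgE hx)), fun j => ?_⟩
  simp only [hgz j, smul_inv_smul₀ hr.1.ne']

/-- Let `D` be a domain in `ℂ^m` and `E` a bounded domain in `ℂ^N`
containing `0` such that for all `r ∈ (0,1)` the closure of `r • E` is contained in `E`.
If the interpolation data `λ_j ↦ z_j` are co-robustly solvable for `hol(D,E)`, then they
are not co-extremally solvable: there exist a compact `K ⊆ E` and a holomorphic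
`h : D → K` with `h (λ j) = z j`. -/
theorem corobustly_solvable_not_coextremally_solvable
    {m N n : ℕ} (D : Set (Fin m → ℂ)) (E : Set (Fin N → ℂ))
    (hDopen : IsOpen D) (hDconn : IsConnected D)
    (hEopen : IsOpen E) (hEconn : IsConnected E) (hEbdd : Bornology.IsBounded E)
    (h0E : (0 : Fin N → ℂ) ∈ E)
    (hshrink : ∀ r : ℝ, r ∈ Ioo (0:ℝ) 1 → closure ((fun x => r • x) '' E) ⊆ E)
    (lam : Fin n → (Fin m → ℂ)) (hlam : ∀ j, lam j ∈ D)
    (hinj : Function.Injective lam)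
    (z : Fin n → (Fin N → ℂ)) (hz : ∀ j, z j ∈ E)
    (hcorobust : ∃ U : Fin n → Set (Fin N → ℂ),
      (∀ j, IsOpen (U j) ∧ z j ∈ U j ∧ U j ⊆ E) ∧
      ∀ z' : Fin n → (Fin N → ℂ), (∀ j, z' j ∈ U j) →
        ∃ h : (Fin m → ℂ) → (Fin N → ℂ),
          DifferentiableOn ℂ h D ∧ MapsTo h D E ∧ ∀ j, h (lam j) = z' j) :
    ∃ K : Set (Fin N → ℂ), IsCompact K ∧ K ⊆ E ∧
      ∃ h : (Fin m → ℂ) → (Fin N → ℂ),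
        DifferentiableOn ℂ h D ∧ MapsTo h D K ∧ ∀ j, h (lam j) = z j :=
  corobustly_solvable_not_coextremally_solvable_general D E hEbdd hshrink lam z hcorobust
end

section
/- Let E = (1/4)𝔻 ∪ (𝔻 ∩ {z ∈ ℂ : Im z < 0}), where 𝔻 is the open unit disc in ℂ. Then E is a domain that is starlike about 0, but the closure of (1/2)E is not contained in E. Hence the property 'for all r ∈ (0,1), the closure of rE is contained in E' is strictly stronger than being starlike about 0. -/
/-!
The lower half-disc `D` is open and convex with `0` in its closure, so every open segment from
`0` to a point of `D` stays in `D`; together with the small disc around `0` this makes `E`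
starlike. But `1 ∈ closure D`, so `1/2` lies in the closure of `(1/2)E`, while `1/2` is neither
in the disc of radius `1/4` nor in the open lower half-plane.
-/

open Set Metric

section ConvexClosure

variable {E : Type*} [AddCommGroup E] [Module ℝ E] [TopologicalSpace E]
  [IsTopologicalAddGroup E] [ContinuousSMul ℝ E] {s t : Set E} {x : E}

theorem Convex.closure_inter_closure_subset_closure_inter (hs : Convex ℝ s) (ht : Convex ℝ t)
    (hso : IsOpen s) (hto : IsOpen t) (hst : (s ∩ t).Nonempty) :
    closure s ∩ closure t ⊆ closure (s ∩ t) := by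
  obtain ⟨p, hps, hpt⟩ := hst
  rintro x ⟨hxs, hxt⟩
  have hseg : openSegment ℝ x p ⊆ s ∩ t := by
    have hsegs := hs.openSegment_closure_interior_subset_interior hxs (hso.interior_eq ▸ hps)
    have hsegt := ht.openSegment_closure_interior_subset_interior hxt (hto.interior_eq ▸ hpt)
    rw [hso.interior_eq] at hsegs
    rw [hto.interior_eq] at hsegt
    exact subset_inter hsegs hsegt
  exact closure_mono hseg (segment_subset_closure_openSegment (left_mem_segment ℝ x p))

theorem StarConvex.union_of_mem_closure (hs : StarConvex ℝ x s) (hxs : x ∈ s) (ht : Convex ℝ t)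
    (hto : IsOpen t) (hxt : x ∈ closure t) : StarConvex ℝ x (s ∪ t) := by
  rintro y (hy | hy) a b ha hb hab
  · exact .inl (hs hy ha hb hab)
  rcases hb.eq_or_lt with rfl | hb
  · obtain rfl : a = 1 := by simpa using hab
    simpa using Or.inl hxs
  · have := ht.combo_closure_interior_mem_interior hxt (hto.interior_eq ▸ hy) ha hb hab
    exact .inr (hto.interior_eq ▸ this)

end ConvexClosure

/-- The set `E = (1/4)𝔻 ∪ (𝔻 ∩ {Im z < 0})` is a domain (open and
connected) which is starlike about `0`, yet the closure of `(1/2)E` is not contained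
in `E`. -/
theorem starlike_but_half_closure_not_subset :
    letI E : Set ℂ := ball (0:ℂ) (1/4) ∪ (ball (0:ℂ) 1 ∩ {z : ℂ | z.im < 0})
    IsOpen E ∧ IsConnected E ∧
      (∀ x ∈ E, ∀ t : ℝ, t ∈ Icc (0:ℝ) 1 → t • x ∈ E) ∧
      ¬ closure ((fun z : ℂ => (1/2 : ℂ) * z) '' E) ⊆ E := by
  have hH : IsOpen {z : ℂ | z.im < 0} := isOpen_lt Complex.continuous_im continuous_const
  set D : Set ℂ := ball 0 1 ∩ {z : ℂ | z.im < 0}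
  have hD : Convex ℝ D := (convex_ball 0 1).inter (convex_halfSpace_im_lt 0)
  have hDne : D.Nonempty := ⟨-Complex.I / 2, by simp; norm_num, by simp; norm_num⟩
  have hDcl : closedBall 0 1 ∩ {z : ℂ | z.im ≤ 0} ⊆ closure D := by
    simpa [closure_ball] using (convex_ball (0 : ℂ) 1).closure_inter_closure_subset_closure_inter
      (convex_halfSpace_im_lt 0) isOpen_ball hH hDne
  have h0 : (0 : ℂ) ∈ ball (0 : ℂ) (1/4) := mem_ball_self (by norm_num)
  have hstar : StarConvex ℝ 0 (ball (0 : ℂ) (1/4) ∪ D) :=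
    ((convex_ball _ _).starConvex h0).union_of_mem_closure h0 hD (isOpen_ball.inter hH)
      (hDcl ⟨by simp, by simp⟩)
  refine ⟨isOpen_ball.union (isOpen_ball.inter hH), (hstar.isPathConnected (.inl h0)).isConnected,
    fun x hx t ht => hstar.smul_mem hx ht.1 ht.2, fun hsub => ?_⟩
  have h1 : (1 : ℂ) ∈ closure D := hDcl ⟨by simp, by simp⟩
  have hhalf := hsub <| image_closure_subset_closure_image (by fun_prop) <|
    mem_image_of_mem _ (closure_mono subset_union_right h1)
  norm_num [D] at hhalf
end

section
/- For every r with 0 < r < 1, the closure of r·G is contained in G; that is, every point (s,p) in the closure of {(rs', r²p') : (s',p') ∈ G} belongs to G. -/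
/-!
Since `r·(z + w, z w) = (r z + r w, (r z)(r w))`, the set `r·G` lies in the image of the closed
bidisc of radius `r` under `(z, w) ↦ (z + w, z w)`. That image is compact, hence closed, and it
lies in `G` because `r < 1`.
-/

open Set Metric

def symmetrize {R : Type*} [Add R] [Mul R] (p : R × R) : R × R :=
  (p.1 + p.2, p.1 * p.2)

lemma continuous_symmetrize {R : Type*} [TopologicalSpace R] [Add R] [Mul R] [ContinuousAdd R]
    [ContinuousMul R] : Continuous (symmetrize : R × R → R × R) := by
  unfold symmetrize; fun_prop

lemma symmetrize_mul_mul {R : Type*} [CommRing R] (c : R) (p : R × R) :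
    symmetrize (c * p.1, c * p.2) = (c * (symmetrize p).1, c ^ 2 * (symmetrize p).2) := by
  simp only [symmetrize, Prod.mk.injEq]
  constructor <;> ring

lemma isCompact_symmetrize_image_closedBall {R : Type*} [SeminormedRing R] [ProperSpace R]
    (x : R) (ρ : ℝ) : IsCompact (symmetrize '' (closedBall x ρ ×ˢ closedBall x ρ)) :=
  ((isCompact_closedBall x ρ).prod (isCompact_closedBall x ρ)).image continuous_symmetrize

lemma mul_mem_closedBall_zero_of_mem_ball_one {𝕜 : Type*} [NormedField 𝕜] (c : 𝕜) {z : 𝕜}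
    (hz : z ∈ ball (0 : 𝕜) 1) : c * z ∈ closedBall (0 : 𝕜) ‖c‖ := by
  rw [mem_ball_zero_iff] at hz
  rw [mem_closedBall_zero_iff, norm_mul]
  exact mul_le_of_le_one_right (norm_nonneg c) hz.le

lemma image_dilate_symmetrize_ball_subset {𝕜 : Type*} [NormedField 𝕜] (c : 𝕜) :
    (fun x : 𝕜 × 𝕜 => (c * x.1, c ^ 2 * x.2)) '' (symmetrize '' (ball 0 1 ×ˢ ball 0 1)) ⊆
      symmetrize '' (closedBall 0 ‖c‖ ×ˢ closedBall 0 ‖c‖) := by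
  rintro _ ⟨_, ⟨p, ⟨hz, hw⟩, rfl⟩, rfl⟩
  exact ⟨(c * p.1, c * p.2),
    ⟨mul_mem_closedBall_zero_of_mem_ball_one c hz, mul_mem_closedBall_zero_of_mem_ball_one c hw⟩,
    symmetrize_mul_mul c p⟩

/-- **Lemma `strongstarlike`.** For `0 < r < 1`, the closure of
`r·G = {(rs, r²p) : (s,p) ∈ G}` is contained in the open symmetrized bidisc `G`. -/
theorem closure_dilate_symmetrized_bidisc_subset
    (G : Set (ℂ × ℂ))
    (hG : G = {x : ℂ × ℂ | ∃ z w : ℂ, ‖z‖ < 1 ∧ ‖w‖ < 1 ∧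
      x = (z + w, z * w)})
    (r : ℝ) (hr : r ∈ Ioo (0:ℝ) 1) :
    closure ((fun x : ℂ × ℂ => ((r : ℂ) * x.1, (r : ℂ)^2 * x.2)) '' G) ⊆ G := by
  have hG_eq : G = symmetrize '' (ball (0 : ℂ) 1 ×ˢ ball 0 1) := by
    ext x
    simp [hG, symmetrize, eq_comm, and_assoc]
  have hr_norm : ‖(r : ℂ)‖ = r := by
    rw [Complex.norm_real, Real.norm_of_nonneg hr.1.le]
  have hclosedBall_subset : closedBall (0 : ℂ) r ⊆ ball 0 1 := closedBall_subset_ball hr.2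
  rw [hG_eq]
  calc closure ((fun x : ℂ × ℂ => ((r : ℂ) * x.1, (r : ℂ) ^ 2 * x.2)) '' _)
      ⊆ closure (symmetrize '' (closedBall (0 : ℂ) r ×ˢ closedBall 0 r)) :=
        closure_mono ((image_dilate_symmetrize_ball_subset (r : ℂ)).trans (by rw [hr_norm]))
    _ = symmetrize '' (closedBall (0 : ℂ) r ×ˢ closedBall 0 r) :=
        (isCompact_symmetrize_image_closedBall 0 r).isClosed.closure_eq
    _ ⊆ symmetrize '' (ball 0 1 ×ˢ ball 0 1) :=
        image_mono (prod_mono hclosedBall_subset hclosedBall_subset)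
end

section
/- For all z ∈ ℂ with |z| = 1, all (s,p) ∈ Γ and all r with 0 < r < 1, one has 2 − zrs ≠ 0 and 1 − |Φ(z, rs, r²p)|² ≥ (1−r)²/(1+r)²; in particular |Φ(z, rs, r²p)| < 1. -/
open Set

/-- The function `Φ(λ, s, p) = (2λp − s)/(2 − λs)`. -/
noncomputable def Phi (l s p : ℂ) : ℂ := (2 * l * p - s) / (2 - l * s)

/-!
Since `Φ(z, rs, r²p) = r Φ(rz, s, p)`, it suffices to show `|Φ(λ, a + b, ab)| ≤ 1` for
`|λ|, |a|, |b| ≤ 1`; then `1 - |Φ(z, rs, r²p)|² ≥ 1 - r² ≥ (1 - r)²/(1 + r)²`.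
With `s = a + b`, `p = ab` one has
`|2 - λs|² - |2λp - s|² = 4(1 - |λp|²) - 4 Re λ(s - s̄p) - (1 - |λ|²)|s|²` and
`s - s̄p = a(1 - |b|²) + b(1 - |a|²)`, so the triangle inequality bounds the left side below
by a real quadratic in `t = |λ|` depending on `x = |a|`, `y = |b|`, which factors as
`(2 - (x + y) - t(x + y - 2xy))(2 + (x + y) - t(x + y + 2xy)) ≥ 0`.
-/

open Complex

theorem Phi_mul_mul_sq (c z s p : ℂ) : Phi z (c * s) (c ^ 2 * p) = c * Phi (c * z) s p := by
  unfold Phi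
  rw [← mul_div_assoc]
  congr 1 <;> ring

theorem norm_two_sub_sq_sub_norm_sq (l a b : ℂ) :
    ‖2 - l * (a + b)‖ ^ 2 - ‖2 * l * (a * b) - (a + b)‖ ^ 2 =
      4 * (1 - ‖l‖ ^ 2 * ‖a‖ ^ 2 * ‖b‖ ^ 2)
        - 4 * (l * (a * (1 - (‖b‖ ^ 2 : ℝ)) + b * (1 - (‖a‖ ^ 2 : ℝ)))).re
        - (1 - ‖l‖ ^ 2) * ‖a + b‖ ^ 2 := by
  simp only [Complex.sq_norm, normSq_apply, mul_re, mul_im, add_re, add_im, sub_re, sub_im,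
    ofReal_re, ofReal_im, one_re, one_im, re_ofNat, im_ofNat]
  ring

theorem norm_mul_one_sub_sq_add_le {a b : ℂ} (ha : ‖a‖ ≤ 1) (hb : ‖b‖ ≤ 1) :
    ‖a * (1 - (‖b‖ ^ 2 : ℝ)) + b * (1 - (‖a‖ ^ 2 : ℝ))‖ ≤
      ‖a‖ * (1 - ‖b‖ ^ 2) + ‖b‖ * (1 - ‖a‖ ^ 2) := by
  have hdefect : ∀ c : ℂ, ‖c‖ ≤ 1 → ‖(1 : ℂ) - (‖c‖ ^ 2 : ℝ)‖ = 1 - ‖c‖ ^ 2 := fun c hc => by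
    rw [← ofReal_one, ← ofReal_sub, norm_real, Real.norm_of_nonneg (by nlinarith [norm_nonneg c])]
  calc _ ≤ ‖a * (1 - (‖b‖ ^ 2 : ℝ))‖ + ‖b * (1 - (‖a‖ ^ 2 : ℝ))‖ := norm_add_le _ _
    _ = _ := by rw [norm_mul, norm_mul, hdefect b hb, hdefect a ha]

theorem quadratic_bidisc_bound_nonneg {t x y : ℝ} (ht1 : t ≤ 1) (hx0 : 0 ≤ x) (hx1 : x ≤ 1)
    (hy0 : 0 ≤ y) (hy1 : y ≤ 1) :
    0 ≤ 4 * (1 - t ^ 2 * x ^ 2 * y ^ 2) - 4 * t * (x * (1 - y ^ 2) + y * (1 - x ^ 2))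
      - (1 - t ^ 2) * (x + y) ^ 2 := by
  have hfactor : 4 * (1 - t ^ 2 * x ^ 2 * y ^ 2) - 4 * t * (x * (1 - y ^ 2) + y * (1 - x ^ 2))
      - (1 - t ^ 2) * (x + y) ^ 2 =
      (2 - (x + y) - t * (x + y - 2 * x * y)) * (2 + (x + y) - t * (x + y + 2 * x * y)) := by
    ring
  have hxy : 0 ≤ x * y := mul_nonneg hx0 hy0
  have hsub : 0 ≤ x + y - 2 * x * y := by
    nlinarith [mul_nonneg hx0 (sub_nonneg.2 hy1), mul_nonneg hy0 (sub_nonneg.2 hx1)]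
  have hleft : 0 ≤ 2 - (x + y) - t * (x + y - 2 * x * y) := by
    nlinarith [mul_le_mul_of_nonneg_right ht1 hsub, mul_nonneg (sub_nonneg.2 hx1) (sub_nonneg.2 hy1)]
  have hright : 0 ≤ 2 + (x + y) - t * (x + y + 2 * x * y) := by
    nlinarith [mul_le_mul_of_nonneg_right ht1 (by positivity : 0 ≤ x + y + 2 * x * y),
      mul_le_one₀ hx1 hy0 hy1]
  rw [hfactor]
  exact mul_nonneg hleft hright

theorem norm_two_mul_mul_sub_add_le {l a b : ℂ} (hl : ‖l‖ ≤ 1) (ha : ‖a‖ ≤ 1) (hb : ‖b‖ ≤ 1) :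
    ‖2 * l * (a * b) - (a + b)‖ ≤ ‖2 - l * (a + b)‖ := by
  have hre : (l * (a * (1 - (‖b‖ ^ 2 : ℝ)) + b * (1 - (‖a‖ ^ 2 : ℝ)))).re ≤
      ‖l‖ * (‖a‖ * (1 - ‖b‖ ^ 2) + ‖b‖ * (1 - ‖a‖ ^ 2)) :=
    (re_le_norm _).trans <| by
      rw [norm_mul]
      exact mul_le_mul_of_nonneg_left (norm_mul_one_sub_sq_add_le ha hb) (norm_nonneg l)
  have hsum : (1 - ‖l‖ ^ 2) * ‖a + b‖ ^ 2 ≤ (1 - ‖l‖ ^ 2) * (‖a‖ + ‖b‖) ^ 2 :=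
    mul_le_mul_of_nonneg_left (pow_le_pow_left₀ (norm_nonneg _) (norm_add_le a b) 2)
      (by nlinarith [norm_nonneg l])
  rw [← sq_le_sq₀ (norm_nonneg _) (norm_nonneg _)]
  nlinarith [norm_two_sub_sq_sub_norm_sq l a b,
    quadratic_bidisc_bound_nonneg hl (norm_nonneg a) ha (norm_nonneg b) hb]

theorem norm_Phi_add_mul_le_one {l a b : ℂ} (hl : ‖l‖ ≤ 1) (ha : ‖a‖ ≤ 1) (hb : ‖b‖ ≤ 1) :
    ‖Phi l (a + b) (a * b)‖ ≤ 1 := by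
  rw [Phi, norm_div]
  exact div_le_one_of_le₀ (norm_two_mul_mul_sub_add_le hl ha hb) (norm_nonneg _)

theorem two_sub_mul_add_ne_zero {l a b : ℂ} (hl : ‖l‖ < 1) (ha : ‖a‖ ≤ 1) (hb : ‖b‖ ≤ 1) :
    2 - l * (a + b) ≠ 0 := by
  have hlt : ‖l * (a + b)‖ < 2 := by
    rw [norm_mul]
    calc ‖l‖ * ‖a + b‖ ≤ ‖l‖ * 2 :=
          mul_le_mul_of_nonneg_left ((norm_add_le a b).trans (by linarith)) (norm_nonneg l)
      _ < 2 := by linarith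
  intro h
  rw [← sub_eq_zero.1 h, norm_ofNat] at hlt
  exact lt_irrefl _ hlt

theorem sq_one_sub_div_sq_one_add_le {r : ℝ} (hr0 : 0 ≤ r) (hr1 : r ≤ 1) :
    (1 - r) ^ 2 / (1 + r) ^ 2 ≤ 1 - r ^ 2 := by
  rw [div_le_iff₀ (by positivity)]
  nlinarith [mul_nonneg (mul_nonneg (sub_nonneg.2 hr1) hr0)
    (by positivity : (0 : ℝ) ≤ r ^ 2 + 3 * r + 3)]

/-- For `|z| = 1`, `(s,p) ∈ Γ` (the closed symmetrized bidisc) and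
`0 < r < 1`, one has `2 − zrs ≠ 0` and `1 − |Φ(z, rs, r²p)|² ≥ (1−r)²/(1+r)²`; in
particular `|Φ(z, rs, r²p)| < 1`. -/
theorem Phi_dilate_bound (z s p : ℂ) (hz : ‖z‖ = 1)
    (hsp : (s, p) ∈ {x : ℂ × ℂ | ∃ z w : ℂ, ‖z‖ ≤ 1 ∧ ‖w‖ ≤ 1 ∧
      x = (z + w, z * w)})
    (r : ℝ) (hr : r ∈ Ioo (0:ℝ) 1) :
    2 - z * (r : ℂ) * s ≠ 0 ∧
    1 - (‖Phi z ((r : ℂ) * s) ((r : ℂ)^2 * p)‖)^2 ≥ (1 - r)^2 / (1 + r)^2 ∧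
    ‖Phi z ((r : ℂ) * s) ((r : ℂ)^2 * p)‖ < 1 := by
  obtain ⟨hr0, hr1⟩ := hr
  obtain ⟨a, b, ha, hb, hab⟩ := hsp
  obtain ⟨rfl, rfl⟩ := Prod.mk.inj hab
  have hrz : ‖(r : ℂ) * z‖ = r := by
    rw [norm_mul, hz, norm_real, Real.norm_of_nonneg hr0.le, mul_one]
  have hPhi : ‖Phi z ((r : ℂ) * (a + b)) ((r : ℂ) ^ 2 * (a * b))‖ ≤ r := by
    rw [Phi_mul_mul_sq, norm_mul, norm_real, Real.norm_of_nonneg hr0.le]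
    exact mul_le_of_le_one_right hr0.le (norm_Phi_add_mul_le_one (hrz.le.trans hr1.le) ha hb)
  refine ⟨?_, ?_, hPhi.trans_lt hr1⟩
  · rw [mul_comm z]
    exact two_sub_mul_add_ne_zero (hrz.trans_lt hr1) ha hb
  · have hsq := pow_le_pow_left₀ (norm_nonneg _) hPhi 2
    linarith [sq_one_sub_div_sq_one_add_le hr0.le hr1.le]
end

section
/- For every ρ with 0 < ρ < 1, every λ ∈ ℂ with |λ| ≤ 1 and every (s,p) ∈ Γ, one has 2 − λρs ≠ 0 and |Φ(λ, ρs, ρ²p)| ≤ ρ; that is, Φ maps the closed unit disc times ρ·Γ into the closed disc of radius ρ. -/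
open Set

/-!
Writing `s = z + w`, `p = z w`, the defect `|2 − cs|² − |2cp − s|²` is a sum of products of
factors `1 − |·|²` with squared moduli, hence nonnegative on the closed tridisc; this gives
`|Φ(c, s, p)| ≤ 1` on `𝔻̄ × Γ`. Since `Φ(λ, ρs, ρ²p) = ρ Φ(λρ, s, p)`, the claim follows, the
denominator `2 − λρs` being nonzero because `|λρs| ≤ 2ρ < 2`.
-/

namespace Phi

open Complex ComplexConjugate

theorem smul_eq (l r s p : ℂ) : Phi l (r * s) (r ^ 2 * p) = r * Phi (l * r) s p := by
  simp only [Phi]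
  ring

theorem normSq_two_sub_mul_sub_normSq_eq (c z w : ℂ) :
    normSq (2 - c * (z + w)) - normSq (2 * c * (z * w) - (z + w)) =
      2 * (1 - normSq w) * normSq (1 - c * z) + (1 - normSq z) * normSq (1 - c * w) +
        (1 - normSq z) * normSq (c - conj w) + (1 - normSq c) * normSq (1 - w * conj z) := by
  simp only [normSq_apply, mul_re, mul_im, sub_re, sub_im, add_re,
    add_im, one_re, one_im, re_ofNat, im_ofNat, conj_re, conj_im]
  ring

/-- No condition on the denominator is needed: where `2 − c(z + w)` vanishes, `Φ` takes the
junk value `0`. -/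
theorem norm_le_one {c z w : ℂ} (hc : ‖c‖ ≤ 1) (hz : ‖z‖ ≤ 1)
    (hw : ‖w‖ ≤ 1) : ‖Phi c (z + w) (z * w)‖ ≤ 1 := by
  have one_sub_normSq_nonneg {u : ℂ} (hu : ‖u‖ ≤ 1) : 0 ≤ 1 - normSq u := by
    rw [normSq_eq_norm_sq]
    nlinarith [norm_nonneg u]
  have hsq : normSq (2 * c * (z * w) - (z + w)) ≤ normSq (2 - c * (z + w)) := by
    have := normSq_two_sub_mul_sub_normSq_eq c z w
    have := one_sub_normSq_nonneg hc
    have := one_sub_normSq_nonneg hz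
    have := one_sub_normSq_nonneg hw
    nlinarith [normSq_nonneg (1 - c * z), normSq_nonneg (1 - c * w),
      normSq_nonneg (c - conj w), normSq_nonneg (1 - w * conj z)]
  rw [normSq_eq_norm_sq, normSq_eq_norm_sq] at hsq
  rw [Phi, norm_div]
  exact div_le_one_of_le₀ ((sq_le_sq₀ (norm_nonneg _) (norm_nonneg _)).mp hsq) (norm_nonneg _)

theorem two_sub_mul_add_ne_zero {c z w : ℂ} (hc : ‖c‖ < 1) (hz : ‖z‖ ≤ 1) (hw : ‖w‖ ≤ 1) :
    2 - c * (z + w) ≠ 0 := by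
  have hlt : ‖c * (z + w)‖ < 2 :=
    calc ‖c * (z + w)‖ ≤ ‖c‖ * (‖z‖ + ‖w‖) := by
          rw [norm_mul]; gcongr; exact norm_add_le z w
      _ < 2 := by nlinarith [norm_nonneg c, norm_nonneg z, norm_nonneg w]
  intro h
  rw [← sub_eq_zero.mp h] at hlt
  norm_num at hlt

end Phi

/-- For `0 < ρ < 1`, `|λ| ≤ 1` and `(s,p) ∈ Γ` (the closed symmetrized
bidisc), one has `2 − λρs ≠ 0` and `|Φ(λ, ρs, ρ²p)| ≤ ρ`:  `Φ` maps the closed unit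
disc times `ρ·Γ` into the closed disc of radius `ρ`. -/
theorem Phi_maps_dilated_Gamma (ρ : ℝ) (hρ : ρ ∈ Ioo (0:ℝ) 1)
    (lam : ℂ) (hlam : ‖lam‖ ≤ 1) (s p : ℂ)
    (hsp : (s, p) ∈ {x : ℂ × ℂ | ∃ z w : ℂ, ‖z‖ ≤ 1 ∧ ‖w‖ ≤ 1 ∧
      x = (z + w, z * w)}) :
    2 - lam * (ρ : ℂ) * s ≠ 0 ∧
    ‖Phi lam ((ρ : ℂ) * s) ((ρ : ℂ)^2 * p)‖ ≤ ρ := by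
  obtain ⟨z, w, hz, hw, hzw⟩ := hsp
  obtain ⟨rfl, rfl⟩ := Prod.mk.inj hzw
  have hρ_norm : ‖(ρ : ℂ)‖ = ρ := by rw [Complex.norm_real, Real.norm_of_nonneg hρ.1.le]
  have hc : ‖lam * ρ‖ < 1 := by
    rw [norm_mul, hρ_norm]
    exact mul_lt_one_of_nonneg_of_lt_one_right hlam hρ.1.le hρ.2
  refine ⟨Phi.two_sub_mul_add_ne_zero hc hz hw, ?_⟩
  rw [Phi.smul_eq, norm_mul, hρ_norm]
  exact mul_le_of_le_one_right hρ.1.le (Phi.norm_le_one hc.le hz hw)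
end

section
/- Let λ_1,…,λ_n be distinct points of 𝔻 and z_1,…,z_n ∈ G, and suppose there exists a holomorphic map h : 𝔻 → Γ with h(λ_j) = z_j for all j. Suppose further that there exist a Blaschke product m of degree at most n and a Blaschke product q of degree at most n−1 such that Φ(m(λ_j), z_j) = q(λ_j) for j = 1,…,n (the data satisfy condition 𝒞 extremally). Then the data λ_j ↦ z_j are extremally solvable: there do not exist an open set U ⊆ ℂ containing the closed unit disc and a holomorphic map f : U → Γ with f(λ_j) = z_j for j = 1,…,n. -/
open Set Metric

/-- The open symmetrized bidisc `G = {(z+w, zw) : z, w ∈ 𝔻}`. -/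
def symBidisc : Set (ℂ × ℂ) :=
  {x : ℂ × ℂ | ∃ z w : ℂ, ‖z‖ < 1 ∧ ‖w‖ < 1 ∧ x = (z + w, z * w)}

/-- The closed symmetrized bidisc `Γ = {(z+w, zw) : |z| ≤ 1, |w| ≤ 1}`. -/
def symBidiscCl : Set (ℂ × ℂ) :=
  {x : ℂ × ℂ | ∃ z w : ℂ, ‖z‖ ≤ 1 ∧ ‖w‖ ≤ 1 ∧ x = (z + w, z * w)}

/-- `f` agrees on the open unit disc with a Blaschke product of degree at most `k`,
i.e. with `λ ↦ c·∏ (λ − aᵢ)/(1 − conj(aᵢ)λ)` where `|c| = 1` and each `aᵢ ∈ 𝔻`. -/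
def IsBlaschkeDegLE (k : ℕ) (f : ℂ → ℂ) : Prop :=
  ∃ (d : ℕ) (c : ℂ) (a : Fin d → ℂ), d ≤ k ∧ ‖c‖ = 1 ∧
    (∀ i, ‖a i‖ < 1) ∧
    ∀ lam ∈ ball (0:ℂ) 1,
      f lam = c * ∏ i, (lam - a i) / (1 - (starRingEnd ℂ) (a i) * lam)

/-!
Suppose `f : U → Γ` interpolates the data on a neighbourhood `U` of the closed disc. For
`|ω| ≤ 1` the map `Φ(ω, ·)` sends `Γ` into the closed disc and `G` into the open disc, so
`g = Φ(m, f)` is a Schur function; it agrees with the Blaschke product `q` of degree at most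
`n - 1` at the `n` nodes, hence `g = q` by uniqueness in the Pick problem (proved by the Schur
algorithm, writing `q = c p / p*` for a polynomial `p` and its conjugate reflection `p*`).
Since `f` is continuous up to the circle, `|Φ(ω, f(1))| = |q(1)| = 1` with `ω = m(1)` unimodular.
But `Φ(ω, f)` is holomorphic on a disc of radius `> 1`, bounded by `1`, and of modulus `< 1` at
a node, where `f` takes a value in `G`: this contradicts the maximum principle.
-/

open Complex ComplexConjugate

theorem norm_lt_of_isPreconnected_of_norm_lt {E F : Type*} [NormedAddCommGroup E]
    [NormedSpace ℂ E] [NormedAddCommGroup F] [NormedSpace ℂ F] {f : E → F} {U : Set E}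
    (hU : IsPreconnected U) (hUo : IsOpen U) (hf : DifferentiableOn ℂ f U) {C : ℝ}
    (hle : ∀ x ∈ U, ‖f x‖ ≤ C) {x₀ : E} (hx₀ : x₀ ∈ U) (hlt : ‖f x₀‖ < C) {x : E}
    (hx : x ∈ U) : ‖f x‖ < C := by
  by_contra! hge
  have hmax : IsMaxOn (norm ∘ f) U x := fun y hy => (hle y hy).trans hge
  have := Complex.norm_eqOn_of_isPreconnected_of_isMaxOn hU hUo hf hx hmax hx₀
  simp only [Function.comp_apply, Function.const_apply] at this
  linarith

lemma exists_lt_ball_subset_of_closedBall_subset {E : Type*} [NormedAddCommGroup E]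
    [NormedSpace ℝ E] [ProperSpace E] {x : E} {r : ℝ} (hr : 0 ≤ r) {U : Set E} (hU : IsOpen U)
    (hrU : closedBall x r ⊆ U) : ∃ R, r < R ∧ ball x R ⊆ U := by
  obtain ⟨δ, hδ, hδU⟩ := (isCompact_closedBall x r).exists_thickening_subset_open hU hrU
  rw [thickening_closedBall hδ hr] at hδU
  exact ⟨δ + r, by linarith, hδU⟩

noncomputable def blaschkeFactor (a ζ : ℂ) : ℂ := (ζ - a) / (1 - conj a * ζ)

lemma normSq_one_sub_conj_mul_sub_normSq_sub (a ζ : ℂ) :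
    normSq (1 - conj a * ζ) - normSq (ζ - a) = (1 - normSq a) * (1 - normSq ζ) := by
  simp only [normSq_apply, mul_re, mul_im, sub_re, sub_im, one_re, one_im, conj_re, conj_im]
  ring

section blaschkeFactor

variable {a ζ : ℂ}

lemma one_sub_conj_mul_ne_zero (ha : ‖a‖ < 1) (hζ : ‖ζ‖ ≤ 1) : 1 - conj a * ζ ≠ 0 := by
  intro h
  have : ‖conj a * ζ‖ < 1 := by
    rw [norm_mul, RCLike.norm_conj]
    nlinarith [norm_nonneg a, norm_nonneg ζ]
  rw [← sub_eq_zero.mp h, norm_one] at this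
  exact lt_irrefl 1 this

lemma norm_sub_le_norm_one_sub_conj_mul (ha : ‖a‖ < 1) (hζ : ‖ζ‖ ≤ 1) :
    ‖ζ - a‖ ≤ ‖1 - conj a * ζ‖ := by
  have h := normSq_one_sub_conj_mul_sub_normSq_sub a ζ
  simp only [← Complex.sq_norm] at h
  have : 0 ≤ (1 - ‖a‖ ^ 2) * (1 - ‖ζ‖ ^ 2) := by
    apply mul_nonneg <;> nlinarith [norm_nonneg a, norm_nonneg ζ]
  exact pow_le_pow_iff_left₀ (norm_nonneg _) (norm_nonneg _) two_ne_zero |>.mp (by linarith)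

lemma norm_sub_lt_norm_one_sub_conj_mul (ha : ‖a‖ < 1) (hζ : ‖ζ‖ < 1) :
    ‖ζ - a‖ < ‖1 - conj a * ζ‖ := by
  have h := normSq_one_sub_conj_mul_sub_normSq_sub a ζ
  simp only [← Complex.sq_norm] at h
  have : 0 < (1 - ‖a‖ ^ 2) * (1 - ‖ζ‖ ^ 2) := by
    apply mul_pos <;> nlinarith [norm_nonneg a, norm_nonneg ζ]
  exact pow_lt_pow_iff_left₀ (norm_nonneg _) (norm_nonneg _) two_ne_zero |>.mp (by linarith)

lemma norm_blaschkeFactor_le_one (ha : ‖a‖ < 1) (hζ : ‖ζ‖ ≤ 1) : ‖blaschkeFactor a ζ‖ ≤ 1 := by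
  rw [blaschkeFactor, norm_div]
  exact div_le_one_of_le₀ (norm_sub_le_norm_one_sub_conj_mul ha hζ) (norm_nonneg _)

lemma norm_blaschkeFactor_lt_one (ha : ‖a‖ < 1) (hζ : ‖ζ‖ < 1) : ‖blaschkeFactor a ζ‖ < 1 := by
  have hlt := norm_sub_lt_norm_one_sub_conj_mul ha hζ
  rw [blaschkeFactor, norm_div]
  exact (div_lt_one ((norm_nonneg _).trans_lt hlt)).mpr hlt

lemma norm_blaschkeFactor_eq_one (ha : ‖a‖ < 1) (hζ : ‖ζ‖ = 1) : ‖blaschkeFactor a ζ‖ = 1 := by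
  have h := normSq_one_sub_conj_mul_sub_normSq_sub a ζ
  simp only [← Complex.sq_norm, hζ] at h
  have : ‖ζ - a‖ = ‖1 - conj a * ζ‖ :=
    (pow_left_inj₀ (norm_nonneg _) (norm_nonneg _) two_ne_zero).mp (by linarith)
  rw [blaschkeFactor, norm_div, this, div_self]
  exact norm_ne_zero_iff.mpr (one_sub_conj_mul_ne_zero ha hζ.le)

lemma mapsTo_blaschkeFactor_ball (ha : ‖a‖ < 1) :
    MapsTo (blaschkeFactor a) (ball 0 1) (ball 0 1) := fun ζ hζ => by
  rw [mem_ball_zero_iff] at hζ ⊢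
  exact norm_blaschkeFactor_lt_one ha hζ

lemma differentiableOn_blaschkeFactor (ha : ‖a‖ < 1) :
    DifferentiableOn ℂ (blaschkeFactor a) (closedBall 0 1) :=
  DifferentiableOn.div (by fun_prop) (by fun_prop) fun ζ hζ =>
    one_sub_conj_mul_ne_zero ha (mem_closedBall_zero_iff.mp hζ)

lemma blaschkeFactor_neg_blaschkeFactor (ha : ‖a‖ < 1) (hζ : ‖ζ‖ ≤ 1) :
    blaschkeFactor (-a) (blaschkeFactor a ζ) = ζ := by
  have hD := one_sub_conj_mul_ne_zero ha hζ
  have hx : blaschkeFactor a ζ * (1 - conj a * ζ) = ζ - a := div_mul_cancel₀ _ hD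
  have hden : (1 - conj (-a) * blaschkeFactor a ζ) * (1 - conj a * ζ) = 1 - conj a * a := by
    rw [map_neg]; linear_combination conj a * hx
  have hden' : 1 - conj (-a) * blaschkeFactor a ζ ≠ 0 :=
    left_ne_zero_of_mul (hden ▸ one_sub_conj_mul_ne_zero ha ha.le)
  rw [blaschkeFactor.eq_def (-a), div_eq_iff hden']
  apply mul_right_cancel₀ hD
  rw [map_neg]
  linear_combination (1 - ζ * conj a) * hx

end blaschkeFactor

noncomputable def blaschke {d : ℕ} (c : ℂ) (a : Fin d → ℂ) (ζ : ℂ) : ℂ :=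
  c * ∏ i, blaschkeFactor (a i) ζ

section blaschke

variable {d : ℕ} {c : ℂ} {a : Fin d → ℂ}

lemma norm_blaschke_le_one (hc : ‖c‖ = 1) (ha : ∀ i, ‖a i‖ < 1) {ζ : ℂ} (hζ : ‖ζ‖ ≤ 1) :
    ‖blaschke c a ζ‖ ≤ 1 := by
  rw [blaschke, norm_mul, hc, one_mul, norm_prod]
  exact Finset.prod_le_one (fun _ _ => norm_nonneg _)
    fun i _ => norm_blaschkeFactor_le_one (ha i) hζ

lemma norm_blaschke_eq_one (hc : ‖c‖ = 1) (ha : ∀ i, ‖a i‖ < 1) {ζ : ℂ} (hζ : ‖ζ‖ = 1) :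
    ‖blaschke c a ζ‖ = 1 := by
  rw [blaschke, norm_mul, hc, one_mul, norm_prod]
  exact Finset.prod_eq_one fun i _ => norm_blaschkeFactor_eq_one (ha i) hζ

lemma differentiableOn_blaschke (ha : ∀ i, ‖a i‖ < 1) :
    DifferentiableOn ℂ (blaschke c a) (closedBall 0 1) :=
  (DifferentiableOn.fun_finsetProd fun i _ => differentiableOn_blaschkeFactor (ha i)).const_mul c

end blaschke

def IsSchur (g : ℂ → ℂ) : Prop :=
  DifferentiableOn ℂ g (ball 0 1) ∧ MapsTo g (ball 0 1) (closedBall 0 1)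

namespace IsSchur

variable {g : ℂ → ℂ}

lemma norm_le_one (hg : IsSchur g) {ζ : ℂ} (hζ : ζ ∈ ball (0 : ℂ) 1) : ‖g ζ‖ ≤ 1 :=
  mem_closedBall_zero_iff.mp (hg.2 hζ)

lemma eqOn_const_of_norm_eq_one (hg : IsSchur g) {μ : ℂ} (hμ : μ ∈ ball (0 : ℂ) 1)
    (h : ‖g μ‖ = 1) : EqOn g (fun _ => g μ) (ball 0 1) :=
  Complex.eqOn_of_isPreconnected_of_isMaxOn_norm (convex_ball 0 1).isPreconnected isOpen_ball
    hg.1 hμ fun _ hζ => (hg.norm_le_one hζ).trans h.ge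

lemma const_mul (hg : IsSchur g) {c : ℂ} (hc : ‖c‖ ≤ 1) : IsSchur (fun ζ => c * g ζ) :=
  ⟨hg.1.const_mul c, fun _ hζ => by
    rw [mem_closedBall_zero_iff, norm_mul]
    exact mul_le_one₀ hc (norm_nonneg _) (hg.norm_le_one hζ)⟩

lemma blaschkeFactor_comp (hg : IsSchur g) {w : ℂ} (hw : ‖w‖ < 1) :
    IsSchur (fun ζ => blaschkeFactor w (g ζ)) :=
  ⟨(differentiableOn_blaschkeFactor hw).comp hg.1 hg.2, fun _ hζ =>
    mem_closedBall_zero_iff.mpr (norm_blaschkeFactor_le_one hw (hg.norm_le_one hζ))⟩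

lemma comp_blaschkeFactor (hg : IsSchur g) {a : ℂ} (ha : ‖a‖ < 1) :
    IsSchur (g ∘ blaschkeFactor a) :=
  ⟨hg.1.comp ((differentiableOn_blaschkeFactor ha).mono ball_subset_closedBall)
    (mapsTo_blaschkeFactor_ball ha), hg.2.comp (mapsTo_blaschkeFactor_ball ha)⟩

lemma exists_mul_eq_of_eq_zero (hg : IsSchur g) {μ : ℂ} (hμ : μ ∈ ball (0 : ℂ) 1)
    (h0 : g μ = 0) : ∃ g₁ : ℂ → ℂ, IsSchur g₁ ∧
      ∀ ζ ∈ ball (0 : ℂ) 1, g ζ * (1 - conj μ * ζ) = (ζ - μ) * g₁ ζ := by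
  have hμ1 : ‖μ‖ < 1 := mem_ball_zero_iff.mp hμ
  -- move `μ` to `0` and apply the Schwarz lemma there
  set H := g ∘ blaschkeFactor (-μ)
  have hH : IsSchur H := hg.comp_blaschkeFactor (by rwa [norm_neg])
  have hH0 : H 0 = 0 := by simp [H, blaschkeFactor, h0]
  refine ⟨dslope H 0 ∘ blaschkeFactor μ, ⟨?_, fun ζ hζ => ?_⟩, fun ζ hζ => ?_⟩
  · exact ((differentiableOn_dslope (isOpen_ball.mem_nhds (mem_ball_self one_pos))).mpr
      hH.1).comp ((differentiableOn_blaschkeFactor hμ1).mono ball_subset_closedBall)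
      (mapsTo_blaschkeFactor_ball hμ1)
  · have := Complex.norm_dslope_le_div_of_mapsTo_ball hH.1 (by rw [hH0]; exact hH.2)
      (mapsTo_blaschkeFactor_ball hμ1 hζ)
    rw [div_one] at this
    exact mem_closedBall_zero_iff.mpr this
  · have hζ1 : ‖ζ‖ ≤ 1 := (mem_ball_zero_iff.mp hζ).le
    have hH_eq (x : ℂ) : H x = x * dslope H 0 x := by
      simpa [hH0] using (sub_smul_dslope H 0 x).symm
    have hx : blaschkeFactor μ ζ * (1 - conj μ * ζ) = ζ - μ :=
      div_mul_cancel₀ _ (one_sub_conj_mul_ne_zero hμ1 hζ1)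
    calc g ζ * (1 - conj μ * ζ) = H (blaschkeFactor μ ζ) * (1 - conj μ * ζ) := by
          simp only [H, Function.comp_apply, blaschkeFactor_neg_blaschkeFactor hμ1 hζ1]
      _ = (ζ - μ) * (dslope H 0 ∘ blaschkeFactor μ) ζ := by
          rw [hH_eq, ← hx, Function.comp_apply]; ring

end IsSchur

namespace Polynomial

/-- `X ^ N * conj (p (1 / conj X))`: for `p = ∏ (X - aᵢ)` and `N = deg p`, the quotient
`p / conjReflect N p` is the Blaschke product with zeros `aᵢ`. -/
noncomputable def conjReflect (N : ℕ) (p : ℂ[X]) : ℂ[X] := (p.map (starRingEnd ℂ)).reflect N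

variable {N : ℕ} {p q : ℂ[X]}

@[simp] lemma conjReflect_conjReflect : conjReflect N (conjReflect N p) = p := by
  simp [conjReflect, ← reflect_map, Polynomial.map_map]

lemma conjReflect_sub_C_mul (w : ℂ) :
    conjReflect N (p - C w * q) = conjReflect N p - C (conj w) * conjReflect N q := by
  simp [conjReflect, Polynomial.map_sub, reflect_sub, reflect_C_mul]

lemma natDegree_conjReflect_le (hp : p.natDegree ≤ N) : (conjReflect N p).natDegree ≤ N :=
  natDegree_reflect_le.trans (max_le le_rfl ((natDegree_map_le).trans hp))

lemma conjReflect_mul {M : ℕ} (hp : p.natDegree ≤ N) (hq : q.natDegree ≤ M) :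
    conjReflect (N + M) (p * q) = conjReflect N p * conjReflect M q := by
  rw [conjReflect, Polynomial.map_mul, reflect_mul _ _ ((natDegree_map_le).trans hp)
    ((natDegree_map_le).trans hq)]
  rfl

lemma conjReflect_X_sub_C (a : ℂ) : conjReflect 1 (X - C a) = 1 - C (conj a) * X := by
  simp [conjReflect, reflect_sub, reflect_C]

lemma conjReflect_prod_X_sub_C {d : ℕ} (a : Fin d → ℂ) :
    conjReflect d (∏ i, (X - C (a i))) = ∏ i, (1 - C (conj (a i)) * X) := by
  induction d with
  | zero => simp [conjReflect]
  | succ d ih =>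
    rw [Fin.prod_univ_castSucc, Fin.prod_univ_castSucc,
      conjReflect_mul (by simp) (natDegree_X_sub_C_le _), ih, conjReflect_X_sub_C]

lemma exists_X_sub_C_mul_eq_sub_C_mul_conjReflect {d : ℕ} (hp : p.natDegree ≤ d + 1) {w μ : ℂ}
    (hμ : (p - C w * conjReflect (d + 1) p).IsRoot μ) :
    ∃ r : ℂ[X], r.natDegree ≤ d ∧ (X - C μ) * r = p - C w * conjReflect (d + 1) p ∧
      (1 - C (conj μ) * X) * conjReflect d r = conjReflect (d + 1) p - C (conj w) * p := by
  set q := p - C w * conjReflect (d + 1) p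
  have hq : q.natDegree ≤ d + 1 := (natDegree_sub_le _ _).trans
    (max_le hp ((natDegree_C_mul_le _ _).trans (natDegree_conjReflect_le hp)))
  have hr : (q /ₘ (X - C μ)).natDegree ≤ d := by
    rw [natDegree_divByMonic _ (monic_X_sub_C μ), natDegree_X_sub_C]
    omega
  have hqr : (X - C μ) * (q /ₘ (X - C μ)) = q := mul_divByMonic_eq_iff_isRoot.mpr hμ
  refine ⟨q /ₘ (X - C μ), hr, hqr, ?_⟩
  rw [← conjReflect_X_sub_C, ← conjReflect_mul (natDegree_X_sub_C_le _) hr, add_comm, hqr,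
    conjReflect_sub_C_mul, conjReflect_conjReflect]

end Polynomial

namespace IsSchur

open Polynomial

variable {d : ℕ} {p : ℂ[X]} {g : ℂ → ℂ} {S : Finset ℂ}

lemma mul_eval_conjReflect_eq_of_norm_eq_one (hp : p.natDegree ≤ d) (hg : IsSchur g)
    (hS : ↑S ⊆ ball (0 : ℂ) 1) (hd : d < S.card)
    (h : ∀ ζ ∈ S, g ζ * (conjReflect d p).eval ζ = p.eval ζ) {μ : ℂ} (hμ : μ ∈ ball (0 : ℂ) 1)
    (hμ1 : ‖g μ‖ = 1) : ∀ ζ ∈ ball (0 : ℂ) 1, g ζ * (conjReflect d p).eval ζ = p.eval ζ := by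
  have hconst := hg.eqOn_const_of_norm_eq_one hμ hμ1
  have hzero : p - C (g μ) * conjReflect d p = 0 := by
    refine eq_zero_of_natDegree_lt_card_of_eval_eq_zero' _ S (fun ζ hζ => ?_) ?_
    · rw [eval_sub, eval_mul, eval_C, ← h ζ hζ, hconst (hS hζ), sub_self]
    · exact (natDegree_sub_le _ _).trans_lt (max_lt (hp.trans_lt hd)
        ((natDegree_C_mul_le _ _).trans_lt ((natDegree_conjReflect_le hp).trans_lt hd)))
  intro ζ hζ
  have := congrArg (eval ζ) hzero
  rw [eval_sub, eval_mul, eval_C, eval_zero] at this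
  rw [hconst hζ]
  linear_combination -this

lemma exists_schur_step (hp : p.natDegree ≤ d + 1) (hg : IsSchur g) {μ : ℂ}
    (hμ : μ ∈ ball (0 : ℂ) 1) (hw : ‖g μ‖ < 1)
    (hμp : g μ * (conjReflect (d + 1) p).eval μ = p.eval μ) :
    ∃ g₁ : ℂ → ℂ, IsSchur g₁ ∧ ∃ r : ℂ[X], r.natDegree ≤ d ∧ ∀ ζ ∈ ball (0 : ℂ) 1, ζ ≠ μ →
      (g ζ * (conjReflect (d + 1) p).eval ζ = p.eval ζ ↔
        g₁ ζ * (conjReflect d r).eval ζ = r.eval ζ) := by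
  set w := g μ
  set ps := conjReflect (d + 1) p
  obtain ⟨g₁, hg₁, hgg₁⟩ :=
    (hg.blaschkeFactor_comp hw).exists_mul_eq_of_eq_zero hμ (by simp [w, blaschkeFactor])
  obtain ⟨r, hr, hqr, hrs⟩ := exists_X_sub_C_mul_eq_sub_C_mul_conjReflect (w := w) hp
    (by rw [IsRoot, eval_sub, eval_mul, eval_C, ← hμp, sub_self])
  refine ⟨g₁, hg₁, r, hr, fun ζ hζ hζμ => ?_⟩
  have hq_at : (ζ - μ) * r.eval ζ = p.eval ζ - w * ps.eval ζ := by
    simpa using congrArg (eval ζ) hqr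
  have hrs_at : (1 - conj μ * ζ) * (conjReflect d r).eval ζ = ps.eval ζ - conj w * p.eval ζ := by
    simpa using congrArg (eval ζ) hrs
  have hA : 1 - conj w * g ζ ≠ 0 := one_sub_conj_mul_ne_zero hw (hg.norm_le_one hζ)
  have hG : blaschkeFactor w (g ζ) * (1 - conj w * g ζ) = g ζ - w := div_mul_cancel₀ _ hA
  constructor
  · intro h
    apply mul_left_cancel₀ (mul_ne_zero (sub_ne_zero.mpr hζμ) hA)
    linear_combination (-((1 - conj w * g ζ) * (conjReflect d r).eval ζ)) * hgg₁ ζ hζ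
      + ((1 - conj μ * ζ) * (conjReflect d r).eval ζ) * hG
      + (g ζ - w) * hrs_at - (1 - conj w * g ζ) * hq_at
      + ((g ζ - w) * conj w + (1 - conj w * g ζ)) * h
  · intro h
    apply mul_left_cancel₀ (one_sub_conj_mul_ne_zero hw hw.le)
    linear_combination (-(g ζ - w)) * hrs_at
      - ((1 - conj μ * ζ) * (conjReflect d r).eval ζ) * hG
      + ((1 - conj w * g ζ) * (conjReflect d r).eval ζ) * hgg₁ ζ hζ
      + ((1 - conj w * g ζ) * (ζ - μ)) * h + (1 - conj w * g ζ) * hq_at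

/-- Uniqueness in the Pick problem with inner data `p / conjReflect d p`. -/
theorem mul_eval_conjReflect_eq_of_card_lt (hp : p.natDegree ≤ d) (hg : IsSchur g)
    (hS : ↑S ⊆ ball (0 : ℂ) 1) (hd : d < S.card)
    (h : ∀ ζ ∈ S, g ζ * (conjReflect d p).eval ζ = p.eval ζ) :
    ∀ ζ ∈ ball (0 : ℂ) 1, g ζ * (conjReflect d p).eval ζ = p.eval ζ := by
  induction d generalizing p g S with
  | zero =>
    obtain ⟨μ, hμS⟩ := Finset.card_pos.mp hd
    obtain ⟨c, rfl⟩ : ∃ c, p = C c := ⟨_, eq_C_of_natDegree_le_zero hp⟩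
    have hstar : conjReflect 0 (C c) = C (conj c) := by simp [conjReflect, reflect_C]
    rcases eq_or_ne c 0 with rfl | hc
    · simp [conjReflect]
    refine hg.mul_eval_conjReflect_eq_of_norm_eq_one hp hS hd h (hS hμS) ?_
    have := congrArg norm (h μ hμS)
    rwa [hstar, eval_C, eval_C, norm_mul, RCLike.norm_conj,
      mul_eq_right₀ (norm_ne_zero_iff.mpr hc)] at this
  | succ d ih =>
    obtain ⟨μ, hμS⟩ := Finset.card_pos.mp (Nat.zero_lt_of_lt hd)
    have hμ : μ ∈ ball (0 : ℂ) 1 := hS hμS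
    rcases (hg.norm_le_one hμ).eq_or_lt with hw | hw
    · exact hg.mul_eval_conjReflect_eq_of_norm_eq_one hp hS hd h hμ hw
    obtain ⟨g₁, hg₁, r, hr, hiff⟩ := hg.exists_schur_step hp hμ hw (h μ hμS)
    have hr_on := ih hr hg₁ (S := S.erase μ)
      ((Finset.coe_subset.mpr (S.erase_subset μ)).trans hS)
      (by rw [Finset.card_erase_of_mem hμS]; omega) fun ζ hζ => by
        obtain ⟨hζμ, hζS⟩ := Finset.mem_erase.mp hζ
        exact (hiff ζ (hS hζS) hζμ).mp (h ζ hζS)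
    intro ζ hζ
    rcases eq_or_ne ζ μ with rfl | hζμ
    · exact h ζ hμS
    · exact (hiff ζ hζ hζμ).mpr (hr_on ζ hζ)

end IsSchur

section blaschke

open Polynomial

variable {d : ℕ} {c : ℂ} {a : Fin d → ℂ}

lemma blaschke_mul_eval_conjReflect (ha : ∀ i, ‖a i‖ < 1) {ζ : ℂ} (hζ : ‖ζ‖ ≤ 1) :
    blaschke c a ζ * (conjReflect d (∏ i, (X - C (a i)))).eval ζ
      = c * (∏ i, (X - C (a i))).eval ζ := by
  rw [conjReflect_prod_X_sub_C, eval_prod, eval_prod, blaschke, mul_assoc,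
    ← Finset.prod_mul_distrib]
  congr 1
  refine Finset.prod_congr rfl fun i _ => ?_
  simp only [eval_sub, eval_one, eval_mul, eval_C, eval_X]
  exact div_mul_cancel₀ _ (one_sub_conj_mul_ne_zero (ha i) hζ)

theorem IsSchur.eqOn_blaschke (hc : ‖c‖ = 1) (ha : ∀ i, ‖a i‖ < 1) {g : ℂ → ℂ} (hg : IsSchur g)
    {ι : Type*} [Fintype ι] {lam : ι → ℂ} (hlam : ∀ j, lam j ∈ ball (0 : ℂ) 1)
    (hinj : Function.Injective lam) (hd : d < Fintype.card ι)
    (h : ∀ j, g (lam j) = blaschke c a (lam j)) : EqOn g (blaschke c a) (ball 0 1) := by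
  classical
  have hcc : conj c * c = 1 := by
    rw [← Complex.normSq_eq_conj_mul_self, Complex.normSq_eq_norm_sq, hc]; norm_num
  -- `blaschke c a = c * p / conjReflect d p` for `p = ∏ (X - aᵢ)`, and `conj c = c⁻¹`
  have key := (hg.const_mul (c := conj c) (by rw [RCLike.norm_conj, hc]))
    |>.mul_eval_conjReflect_eq_of_card_lt (d := d) (p := ∏ i, (X - C (a i)))
      (S := Finset.univ.image lam) (by simp) (by simpa [Set.range_subset_iff] using hlam)
      (by rwa [Finset.card_image_of_injective _ hinj, Finset.card_univ]) (by
        simp only [Finset.mem_image, Finset.mem_univ, true_and, forall_exists_index,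
          forall_apply_eq_imp_iff]
        intro j
        rw [h j, mul_assoc, blaschke_mul_eval_conjReflect ha (mem_closedBall_zero_iff.mp
          (ball_subset_closedBall (hlam j))), ← mul_assoc, hcc, one_mul])
  intro ζ hζ
  have hζ1 : ‖ζ‖ ≤ 1 := (mem_ball_zero_iff.mp hζ).le
  have hden : (conjReflect d (∏ i, (X - C (a i)))).eval ζ ≠ 0 := by
    rw [conjReflect_prod_X_sub_C, eval_prod]
    exact Finset.prod_ne_zero_iff.mpr fun i _ => by
      simpa using one_sub_conj_mul_ne_zero (ha i) hζ1
  apply mul_right_cancel₀ hden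
  rw [blaschke_mul_eval_conjReflect ha hζ1, ← key ζ hζ, ← mul_assoc, ← mul_assoc, mul_comm c,
    hcc]
  ring

end blaschke

lemma norm_fst_le_two_of_mem_symBidiscCl {x : ℂ × ℂ} (hx : x ∈ symBidiscCl) : ‖x.1‖ ≤ 2 := by
  obtain ⟨z, w, hz, hw, rfl⟩ := hx
  linarith [norm_add_le z w]

lemma norm_fst_lt_two_of_mem_symBidisc {x : ℂ × ℂ} (hx : x ∈ symBidisc) : ‖x.1‖ < 2 := by
  obtain ⟨z, w, hz, hw, rfl⟩ := hx
  linarith [norm_add_le z w]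

lemma sq_norm_Phi_num_add_le_sq_norm_Phi_den {z w ω : ℂ} (hz : ‖z‖ ≤ 1) (hw : ‖w‖ ≤ 1)
    (hω : ‖ω‖ ≤ 1) :
    ‖2 * ω * (z * w) - (z + w)‖ ^ 2
        + 2 * (1 + ‖ω‖ ^ 2) * ((1 - ‖z‖) * (1 - ‖w‖) * (1 - ‖z‖ * ‖w‖))
      ≤ ‖2 - ω * (z + w)‖ ^ 2 := by
  -- with `s = z + w`, `p = z w`: `s - p conj s = (1 - |w|²) z + (1 - |z|²) w`
  have hid : normSq (2 - ω * (z + w)) - normSq (2 * ω * (z * w) - (z + w)) =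
      (1 - normSq ω) * (4 - normSq (z + w)) + 4 * normSq ω * (1 - normSq (z * w)) -
        4 * (ω * (((1 - normSq w : ℝ) : ℂ) * z + ((1 - normSq z : ℝ) : ℂ) * w)).re := by
    simp only [normSq_apply, ofReal_sub, ofReal_one, ofReal_add, ofReal_mul, mul_re, mul_im,
      sub_re, sub_im, add_re, add_im, one_re, one_im, ofReal_re, ofReal_im, re_ofNat, im_ofNat]
    ring
  simp only [← Complex.sq_norm, norm_mul] at hid
  set x := ‖z‖
  set y := ‖w‖
  set r := ‖ω‖
  have hx : 0 ≤ x := norm_nonneg z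
  have hy : 0 ≤ y := norm_nonneg w
  have hr : 0 ≤ r := norm_nonneg ω
  have hx2 : 0 ≤ 1 - x ^ 2 := by nlinarith
  have hy2 : 0 ≤ 1 - y ^ 2 := by nlinarith
  have hr2 : 0 ≤ 1 - r ^ 2 := by nlinarith
  have hsum : ‖z + w‖ ^ 2 ≤ (x + y) ^ 2 := by gcongr; exact norm_add_le z w
  have hre : (ω * (((1 - y ^ 2 : ℝ) : ℂ) * z + ((1 - x ^ 2 : ℝ) : ℂ) * w)).re
      ≤ r * ((1 - y ^ 2) * x + (1 - x ^ 2) * y) := by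
    refine (re_le_norm _).trans ?_
    rw [norm_mul]
    gcongr
    refine (norm_add_le _ _).trans_eq ?_
    simp only [norm_mul, norm_real, Real.norm_eq_abs, abs_of_nonneg hy2, abs_of_nonneg hx2]
    rfl
  have key : 2 * (1 + r ^ 2) * ((1 - x) * (1 - y) * (1 - x * y)) ≤
      (1 - r ^ 2) * (4 - (x + y) ^ 2) + 4 * r ^ 2 * (1 - x ^ 2 * y ^ 2)
        - 4 * (r * ((1 - y ^ 2) * x + (1 - x ^ 2) * y)) := by
    have h1 : 0 ≤ 2 * (1 - r) ^ 2 * (1 - x * y) * (x + y) := by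
      have : 0 ≤ 1 - x * y := by nlinarith
      positivity
    have h2 : 0 ≤ (1 - r ^ 2) * ((1 - x ^ 2) * (1 - y ^ 2) + (1 - x * y) ^ 2) := by positivity
    linear_combination h1 + h2
  nlinarith [mul_le_mul_of_nonneg_left hsum hr2]

lemma norm_Phi_le_one {ω : ℂ} (hω : ‖ω‖ ≤ 1) {x : ℂ × ℂ} (hx : x ∈ symBidiscCl) :
    ‖Phi ω x.1 x.2‖ ≤ 1 := by
  obtain ⟨z, w, hz, hw, rfl⟩ := hx
  have h := sq_norm_Phi_num_add_le_sq_norm_Phi_den hz hw hω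
  have : 0 ≤ 2 * (1 + ‖ω‖ ^ 2) * ((1 - ‖z‖) * (1 - ‖w‖) * (1 - ‖z‖ * ‖w‖)) := by
    have : 0 ≤ 1 - ‖z‖ * ‖w‖ := by nlinarith [norm_nonneg z, norm_nonneg w]
    have : 0 ≤ 1 - ‖z‖ := by linarith
    have : 0 ≤ 1 - ‖w‖ := by linarith
    positivity
  dsimp only [Phi]
  rw [norm_div]
  exact div_le_one_of_le₀ (pow_le_pow_iff_left₀ (norm_nonneg _) (norm_nonneg _) two_ne_zero
    |>.mp (by linarith)) (norm_nonneg _)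

lemma norm_Phi_lt_one {ω : ℂ} (hω : ‖ω‖ ≤ 1) {x : ℂ × ℂ} (hx : x ∈ symBidisc) :
    ‖Phi ω x.1 x.2‖ < 1 := by
  obtain ⟨z, w, hz, hw, rfl⟩ := hx
  have h := sq_norm_Phi_num_add_le_sq_norm_Phi_den hz.le hw.le hω
  have : 0 < 2 * (1 + ‖ω‖ ^ 2) * ((1 - ‖z‖) * (1 - ‖w‖) * (1 - ‖z‖ * ‖w‖)) := by
    have : 0 < 1 - ‖z‖ * ‖w‖ := by nlinarith [norm_nonneg z, norm_nonneg w]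
    have : 0 < 1 - ‖z‖ := by linarith
    have : 0 < 1 - ‖w‖ := by linarith
    positivity
  have hlt : ‖2 * ω * (z * w) - (z + w)‖ < ‖2 - ω * (z + w)‖ :=
    pow_lt_pow_iff_left₀ (norm_nonneg _) (norm_nonneg _) two_ne_zero |>.mp (by linarith)
  dsimp only [Phi]
  rw [norm_div]
  exact (div_lt_one ((norm_nonneg _).trans_lt hlt)).mpr hlt

lemma DifferentiableOn.Phi {ω s p : ℂ → ℂ} {V : Set ℂ} (hω : DifferentiableOn ℂ ω V)
    (hs : DifferentiableOn ℂ s V) (hp : DifferentiableOn ℂ p V) (hω1 : ∀ ζ ∈ V, ‖ω ζ‖ ≤ 1)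
    (hs2 : ∀ ζ ∈ V, ‖s ζ‖ < 2) : DifferentiableOn ℂ (fun ζ => Phi (ω ζ) (s ζ) (p ζ)) V := by
  refine ((((differentiableOn_const 2).mul hω).mul hp).sub hs).div
    ((differentiableOn_const 2).sub (hω.mul hs)) fun ζ hζ h => ?_
  have : ‖ω ζ * s ζ‖ < 2 := by
    rw [norm_mul]
    nlinarith [hω1 ζ hζ, hs2 ζ hζ, norm_nonneg (ω ζ), norm_nonneg (s ζ)]
  rw [← sub_eq_zero.mp h, Complex.norm_ofNat] at this
  exact lt_irrefl 2 this

section mapsTo_symBidiscCl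

variable {V : Set ℂ} {f : ℂ → ℂ × ℂ} {ζ₀ : ℂ}

lemma norm_fst_lt_two_of_mapsTo_symBidiscCl (hV : IsPreconnected V) (hVo : IsOpen V)
    (hf : DifferentiableOn ℂ f V) (hfΓ : MapsTo f V symBidiscCl) (hζ₀ : ζ₀ ∈ V)
    (hfζ₀ : f ζ₀ ∈ symBidisc) {ζ : ℂ} (hζ : ζ ∈ V) : ‖(f ζ).1‖ < 2 :=
  norm_lt_of_isPreconnected_of_norm_lt hV hVo hf.fst
    (fun _ hx => norm_fst_le_two_of_mem_symBidiscCl (hfΓ hx)) hζ₀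
    (norm_fst_lt_two_of_mem_symBidisc hfζ₀) hζ

lemma norm_Phi_lt_one_of_mapsTo_symBidiscCl (hV : IsPreconnected V) (hVo : IsOpen V)
    (hf : DifferentiableOn ℂ f V) (hfΓ : MapsTo f V symBidiscCl) (hζ₀ : ζ₀ ∈ V)
    (hfζ₀ : f ζ₀ ∈ symBidisc) {ω : ℂ} (hω : ‖ω‖ ≤ 1) {ζ : ℂ} (hζ : ζ ∈ V) :
    ‖Phi ω (f ζ).1 (f ζ).2‖ < 1 :=
  norm_lt_of_isPreconnected_of_norm_lt hV hVo
    (DifferentiableOn.Phi (differentiableOn_const ω) hf.fst hf.snd (fun _ _ => hω)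
      fun _ hx => norm_fst_lt_two_of_mapsTo_symBidiscCl hV hVo hf hfΓ hζ₀ hfζ₀ hx)
    (fun _ hx => norm_Phi_le_one hω (hfΓ hx)) hζ₀ (norm_Phi_lt_one hω hfζ₀) hζ

end mapsTo_symBidiscCl

theorem condC_extremal_implies_extremally_solvable_general
    {n : ℕ} (hn : 0 < n)
    (lam : Fin n → ℂ) (hlam : ∀ j, lam j ∈ ball (0:ℂ) 1)
    (hinj : Function.Injective lam)
    (z : Fin n → ℂ × ℂ) (hz : ∀ j, z j ∈ symBidisc)
    (hC : ∃ m q : ℂ → ℂ, IsBlaschkeDegLE n m ∧ IsBlaschkeDegLE (n - 1) q ∧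
      ∀ j, Phi (m (lam j)) (z j).1 (z j).2 = q (lam j)) :
    ¬ ∃ (U : Set ℂ) (f : ℂ → ℂ × ℂ), IsOpen U ∧ closedBall (0:ℂ) 1 ⊆ U ∧
      DifferentiableOn ℂ f U ∧ MapsTo f U symBidiscCl ∧ ∀ j, f (lam j) = z j := by
  rintro ⟨U, f, hU, hUsub, hf, hfΓ, hfz⟩
  obtain ⟨m, q, ⟨_, cm, am, -, hcm, ham, hm⟩, ⟨dq, cq, aq, hdq, hcq, haq, hq⟩, hΦ⟩ := hC
  obtain ⟨R, hR, hRU⟩ := exists_lt_ball_subset_of_closedBall_subset zero_le_one hU hUsub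
  have hcl : closedBall (0 : ℂ) 1 ⊆ ball 0 R := closedBall_subset_ball hR
  have hballR := (convex_ball (0 : ℂ) R).isPreconnected
  have hlam₀ : lam ⟨0, hn⟩ ∈ ball (0 : ℂ) R := hcl (ball_subset_closedBall (hlam _))
  have hf₀ : f (lam ⟨0, hn⟩) ∈ symBidisc := (hfz _).symm ▸ hz _
  set g : ℂ → ℂ := fun ζ => Phi (blaschke cm am ζ) (f ζ).1 (f ζ).2
  have hgd : DifferentiableOn ℂ g (closedBall 0 1) :=
    DifferentiableOn.Phi (differentiableOn_blaschke ham) (hf.mono hUsub).fst (hf.mono hUsub).snd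
      (fun ζ hζ => norm_blaschke_le_one hcm ham (mem_closedBall_zero_iff.mp hζ)) fun ζ hζ =>
        norm_fst_lt_two_of_mapsTo_symBidiscCl hballR isOpen_ball (hf.mono hRU)
          (hfΓ.mono_left hRU) hlam₀ hf₀ (hcl hζ)
  have hg : IsSchur g := ⟨hgd.mono ball_subset_closedBall, fun ζ hζ =>
    mem_closedBall_zero_iff.mpr (norm_Phi_le_one (norm_blaschke_le_one hcm ham
      (mem_ball_zero_iff.mp hζ).le) (hfΓ (hUsub (ball_subset_closedBall hζ))))⟩
  have hgq : EqOn g (blaschke cq aq) (closedBall 0 1) :=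
    (hg.eqOn_blaschke hcq haq hlam hinj (by simp only [Fintype.card_fin]; omega) fun j => by
      have hj := hΦ j
      rwa [hm _ (hlam j), hq _ (hlam j), ← hfz j] at hj).of_subset_closure
      hgd.continuousOn (differentiableOn_blaschke haq).continuousOn ball_subset_closedBall
      (closure_ball (0 : ℂ) one_ne_zero).ge
  have h1 : (1 : ℂ) ∈ closedBall 0 1 := by simp
  have hlt := norm_Phi_lt_one_of_mapsTo_symBidiscCl hballR isOpen_ball (hf.mono hRU)
    (hfΓ.mono_left hRU) hlam₀ hf₀ (norm_blaschke_eq_one hcm ham norm_one).le (hcl h1)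
  exact hlt.ne (by rw [← norm_blaschke_eq_one hcq haq norm_one, ← hgq h1])

/-- If solvable data `λ_j ↦ z_j` (`λ_j ∈ 𝔻` distinct, `z_j ∈ G`) satisfy
condition 𝒞 extremally — i.e. there are Blaschke products `m` of degree at most `n` and
`q` of degree at most `n−1` with `Φ(m(λ_j), z_j) = q(λ_j)` for all `j` — then the data
are extremally solvable: no holomorphic `f : U → Γ` on an open neighbourhood `U` of the
closed unit disc interpolates the data. -/
theorem condC_extremal_implies_extremally_solvable
    {n : ℕ} (hn : 0 < n)
    (lam : Fin n → ℂ) (hlam : ∀ j, lam j ∈ ball (0:ℂ) 1)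
    (hinj : Function.Injective lam)
    (z : Fin n → ℂ × ℂ) (hz : ∀ j, z j ∈ symBidisc)
    (hsolv : ∃ h : ℂ → ℂ × ℂ, DifferentiableOn ℂ h (ball (0:ℂ) 1) ∧
      MapsTo h (ball (0:ℂ) 1) symBidiscCl ∧ ∀ j, h (lam j) = z j)
    (hC : ∃ m q : ℂ → ℂ, IsBlaschkeDegLE n m ∧ IsBlaschkeDegLE (n - 1) q ∧
      ∀ j, Phi (m (lam j)) (z j).1 (z j).2 = q (lam j)) :
    ¬ ∃ (U : Set ℂ) (f : ℂ → ℂ × ℂ), IsOpen U ∧ closedBall (0:ℂ) 1 ⊆ U ∧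
      DifferentiableOn ℂ f U ∧ MapsTo f U symBidiscCl ∧ ∀ j, f (lam j) = z j :=
  condC_extremal_implies_extremally_solvable_general hn lam hlam hinj z hz hC
end

section
/- For every (s,p) ∈ Γ and every z ∈ ℂ with |z| = 1, one has |2 − zs|² − |2zp − s|² ≥ 0; equivalently, whenever 2 − zs ≠ 0, |Φ(z, s, p)| ≤ 1. -/
open Set

/-!
Write `s = a + b`, `p = ab` with `|a|, |b| ≤ 1`. Since `|z| = 1`, multiplying by `z` does not change
norms, so with `u = za`, `v = zb` the quantity is `|2 − u − v|² − |u + v − 2uv|²`, and this equals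
`2((1 − |u|²)|1 − v|² + (1 − |v|²)|1 − u|²)`, which is visibly nonnegative on the closed bidisc.
-/

namespace Complex

theorem norm_two_sub_add_sq_sub_norm_add_sub_two_mul_sq (u v : ℂ) :
    ‖2 - (u + v)‖ ^ 2 - ‖u + v - 2 * u * v‖ ^ 2 =
      2 * ((1 - ‖u‖ ^ 2) * ‖1 - v‖ ^ 2 + (1 - ‖v‖ ^ 2) * ‖1 - u‖ ^ 2) := by
  simp only [Complex.sq_norm, normSq_apply, sub_re, sub_im, add_re, add_im, mul_re, mul_im,
    one_re, one_im, re_ofNat, im_ofNat]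
  ring

theorem norm_add_sub_two_mul_le_norm_two_sub_add {u v : ℂ} (hu : ‖u‖ ≤ 1) (hv : ‖v‖ ≤ 1) :
    ‖u + v - 2 * u * v‖ ^ 2 ≤ ‖2 - (u + v)‖ ^ 2 := by
  have hu2 : 0 ≤ 1 - ‖u‖ ^ 2 := sub_nonneg.mpr (pow_le_one₀ (norm_nonneg u) hu)
  have hv2 : 0 ≤ 1 - ‖v‖ ^ 2 := sub_nonneg.mpr (pow_le_one₀ (norm_nonneg v) hv)
  have := norm_two_sub_add_sq_sub_norm_add_sub_two_mul_sq u v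
  linarith [mul_nonneg hu2 (sq_nonneg ‖1 - v‖), mul_nonneg hv2 (sq_nonneg ‖1 - u‖)]

end Complex

/-- For `(s,p)` in the closed symmetrized bidisc `Γ` and `|z| = 1`,
one has `|2 − zs|² − |2zp − s|² ≥ 0`; equivalently, whenever `2 − zs ≠ 0`,
`|Φ(z, s, p)| ≤ 1`. -/
theorem Phi_criterion (s p z : ℂ)
    (hsp : (s, p) ∈ {x : ℂ × ℂ | ∃ z w : ℂ, ‖z‖ ≤ 1 ∧ ‖w‖ ≤ 1 ∧
      x = (z + w, z * w)})
    (hz : ‖z‖ = 1) :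
    (‖2 - z * s‖)^2 - (‖2 * z * p - s‖)^2 ≥ 0 ∧
    (2 - z * s ≠ 0 → ‖Phi z s p‖ ≤ 1) := by
  obtain ⟨a, b, ha, hb, hab⟩ := hsp
  obtain ⟨rfl, rfl⟩ := Prod.mk.inj hab
  have hden : 2 - z * (a + b) = 2 - (z * a + z * b) := by ring
  have hnum : ‖2 * z * (a * b) - (a + b)‖ = ‖z * a + z * b - 2 * (z * a) * (z * b)‖ := by
    rw [← one_mul ‖_‖, ← hz, ← norm_mul, ← norm_neg]
    congr 1
    ring
  have hle : ‖2 * z * (a * b) - (a + b)‖ ^ 2 ≤ ‖2 - z * (a + b)‖ ^ 2 := by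
    rw [hden, hnum]
    exact Complex.norm_add_sub_two_mul_le_norm_two_sub_add (by rwa [norm_mul, hz, one_mul])
      (by rwa [norm_mul, hz, one_mul])
  refine ⟨sub_nonneg.mpr hle, fun hne => ?_⟩
  rw [Phi, norm_div, div_le_one (norm_pos_iff.mpr hne)]
  exact (pow_le_pow_iff_left₀ (norm_nonneg _) (norm_nonneg _) two_ne_zero).mp hle
end
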